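/- Let q be a prime power and F a finite extension field of GF(q) of degree m. Let G ∈ F[X] be a separable (squarefree) polynomial of degree r ≥ 1, and let α₁, …, αₙ be pairwise distinct elements of F with G(αᵢ) ≠ 0 for all i. Then the GF(q)-dimension k of the Goppa code Γ(L, G^q) satisfies k ≥ n − m(q−1)r. -/

import Mathlib

open Polynomial

noncomputable def goppaSum {K F : Type*} [Field K] [Field F] [Algebra K F] {n : ℕ}
    (α : Fin n → F) (c : Fin n → K) : Polynomial F :=
  ∑ i, Polynomial.C (algebraMap K F (c i)) *
    ∏ j ∈ Finset.univ.erase i, (Polynomial.X - Polynomial.C (α j))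

/-- The Goppa code `Γ(L, G)` as a `GF(q)`-subspace of `GF(q)ⁿ`. -/
noncomputable def goppaCode {K F : Type*} [Field K] [Field F] [Algebra K F] {n : ℕ}
    (α : Fin n → F) (G : Polynomial F) : Submodule K (Fin n → K) where
  carrier := {c | G ∣ goppaSum α c}
  add_mem' := by
    intro a b ha hb
    have h : goppaSum α (a + b) = goppaSum α a + goppaSum α b := by
      simp only [goppaSum, Pi.add_apply, map_add, add_mul, Finset.sum_add_distrib]
    simp only [Set.mem_setOf_eq] at *
    rw [h]
    exact dvd_add ha hb
  zero_mem' := by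
    simp only [Set.mem_setOf_eq, goppaSum, Pi.zero_apply, map_zero, Polynomial.C_0,
      zero_mul, Finset.sum_const_zero]
    exact dvd_zero _
  smul_mem' := by
    intro k c hc
    have h : goppaSum α (k • c) = Polynomial.C (algebraMap K F k) * goppaSum α c := by
      simp only [goppaSum, Pi.smul_apply, smul_eq_mul, map_mul, Finset.mul_sum, mul_assoc]
    simp only [Set.mem_setOf_eq] at *
    rw [h]
    exact Dvd.dvd.mul_left hc _

/-!
Write `S_c = ∑ c_i ∏_{j ≠ i} (X - α_j)`. Over an algebraic closure the separable `G` has simple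
roots `β`, so `G^q ∣ S_c` as soon as `(X - β)^q ∣ S_c` for every root. Expanding
`∑ c_i / (X - α_i)` at `β` shows that `(X - β)^m ∣ S_c` iff the power sums
`p_k = ∑ c_i (α_i - β)^{-k}` vanish for `1 ≤ k ≤ m`. As the `c_i` lie in `GF(q)`, Frobenius gives
`p_q = p_1^q`, so `Γ(L, G^q) = Γ(L, G^{q-1})`. The latter code is the kernel of the
`GF(q)`-linear map `c ↦ S_c mod G^{q-1}` into `F[X]/(G^{q-1})`, of dimension `m(q-1)r`.
-/

open Finset

section PowerSums

variable {E ι : Type*} [Field E] [Fintype ι] [DecidableEq ι]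

/- In `E⟦X⟧` the sum is `-f * ∑ c_i / (μ_i - X)` with `f = ∏ (X - μ_j)` a unit, and the
coefficient of `X^k` in `1 / (μ - X)` is `μ^{-(k+1)}`. -/
theorem X_pow_dvd_sum_C_mul_prod_erase_iff (c μ : ι → E) (hμ : ∀ i, μ i ≠ 0) (m : ℕ) :
    X ^ m ∣ ∑ i, C (c i) * ∏ j ∈ univ.erase i, (X - C (μ j)) ↔
      ∀ k < m, ∑ i, c i * (μ i)⁻¹ ^ (k + 1) = 0 := by
  set f : E[X] := ∏ j, (X - C (μ j))
  set u : ι → Eˣ := fun i => Units.mk0 (μ i) (hμ i)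
  have hterm (i : ι) : ((∏ j ∈ univ.erase i, (X - C (μ j)) : E[X]) : PowerSeries E) =
      -(f : PowerSeries E) * PowerSeries.invUnitsSub (u i) := by
    rw [show f = (X - C (μ i)) * ∏ j ∈ univ.erase i, (X - C (μ j)) from
      (mul_prod_erase univ _ (mem_univ i)).symm, Polynomial.coe_mul]
    calc _ = ((∏ j ∈ univ.erase i, (X - C (μ j)) : E[X]) : PowerSeries E) *
          (PowerSeries.invUnitsSub (u i) * (PowerSeries.C (u i : E) - PowerSeries.X)) := by
          rw [PowerSeries.invUnitsSub_mul_sub, mul_one]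
      _ = _ := by simp only [u, Units.val_mk0]; push_cast; ring
  have hf : IsUnit (-(f : PowerSeries E)) := by
    refine (PowerSeries.isUnit_iff_constantCoeff.mpr ?_).neg
    rw [← PowerSeries.coeff_zero_eq_constantCoeff_apply, coeff_coe, coeff_zero_eq_eval_zero,
      eval_prod]
    exact (prod_ne_zero_iff.mpr fun j _ => by simpa using hμ j).isUnit
  rw [X_pow_dvd_iff]
  simp_rw [← coeff_coe]
  rw [← PowerSeries.X_pow_dvd_iff]
  have hsum : ((∑ i, C (c i) * ∏ j ∈ univ.erase i, (X - C (μ j)) : E[X]) : PowerSeries E) =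
      -(f : PowerSeries E) * ∑ i, PowerSeries.C (c i) * PowerSeries.invUnitsSub (u i) := by
    rw [← coeToPowerSeries.ringHom_apply, map_sum, mul_sum]
    refine sum_congr rfl fun i _ => ?_
    rw [map_mul, coeToPowerSeries.ringHom_apply, coeToPowerSeries.ringHom_apply, hterm, coe_C]
    ring
  rw [hsum, hf.dvd_mul_left, PowerSeries.X_pow_dvd_iff]
  simp [PowerSeries.coeff_invUnitsSub, u]

theorem X_sub_C_pow_dvd_sum_C_mul_prod_erase_iff (c a : ι → E) {β : E} (hβ : ∀ i, a i ≠ β) (m : ℕ) :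
    (X - C β) ^ m ∣ ∑ i, C (c i) * ∏ j ∈ univ.erase i, (X - C (a j)) ↔
      ∀ k < m, ∑ i, c i * (a i - β)⁻¹ ^ (k + 1) = 0 := by
  rw [← map_dvd_iff (taylorEquiv β)]
  have hX : taylorEquiv β X = X + C β := taylor_X β
  have hC (x : E) : taylorEquiv β (C x) = C x := taylor_C β x
  have hshift (x : E) : taylorEquiv β (X - C x) = X - C (x - β) := by
    rw [map_sub, hX, hC, C_sub]
    ring
  simp only [map_pow, map_sum, map_mul, map_prod, hshift, hC, sub_self, C_0, sub_zero]
  exact X_pow_dvd_sum_C_mul_prod_erase_iff c _ (fun i => sub_ne_zero.mpr (hβ i)) m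

end PowerSums

theorem sum_algebraMap_mul_pow_card {K E ι : Type*} [Field K] [Fintype K] [CommRing E]
    [Nontrivial E] [Algebra K E] (s : Finset ι) (c : ι → K) (x : ι → E) :
    (∑ i ∈ s, algebraMap K E (c i) * x i) ^ Fintype.card K =
      ∑ i ∈ s, algebraMap K E (c i) * x i ^ Fintype.card K := by
  obtain ⟨p, _⟩ := CharP.exists K
  obtain ⟨e, hp, hcard⟩ := FiniteField.card K p
  have : Fact p.Prime := ⟨hp⟩
  have : CharP E p := charP_of_injective_algebraMap (algebraMap K E).injective p
  rw [hcard, sum_pow_char_pow]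
  refine sum_congr rfl fun i _ => ?_
  rw [mul_pow, ← hcard, ← map_pow, FiniteField.pow_card]

theorem Polynomial.Separable.pow_dvd_of_forall_X_sub_C_pow_dvd {E : Type*} [Field E]
    {G Q : E[X]} (hG : G.Separable) (hs : G.Splits) {k : ℕ}
    (h : ∀ β ∈ G.roots, (X - C β) ^ k ∣ Q) : G ^ k ∣ Q := by
  classical
  rcases eq_or_ne Q 0 with rfl | hQ
  · exact dvd_zero _
  refine (hs.pow k).dvd_of_roots_le_roots (pow_ne_zero k hG.ne_zero) ?_
  rw [roots_pow, Multiset.le_iff_count]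
  intro β
  rw [Multiset.count_nsmul]
  by_cases hβ : β ∈ G.roots
  · rw [Multiset.count_eq_one_of_mem (nodup_roots hG) hβ, mul_one, count_roots]
    exact (le_rootMultiplicity_iff hQ).mpr (h β hβ)
  · rw [Multiset.count_eq_zero.mpr hβ, mul_zero]
    exact Nat.zero_le _

section Goppa

variable {K F : Type*} [Field K] [Field F] [Algebra K F] {n : ℕ}

theorem mem_goppaCode {α : Fin n → F} {G : F[X]} {c : Fin n → K} :
    c ∈ goppaCode α G ↔ G ∣ goppaSum α c :=
  Iff.rfl

theorem goppaSum_eq_linearCombination (α : Fin n → F) (c : Fin n → K) :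
    goppaSum α c =
      Fintype.linearCombination K (fun i => ∏ j ∈ univ.erase i, (X - C (α j))) c := by
  simp only [goppaSum, Fintype.linearCombination_apply, Algebra.smul_def,
    Polynomial.algebraMap_apply]

theorem goppaSum_map {E : Type*} [Field E] [Algebra K E] [Algebra F E] [IsScalarTower K F E]
    (α : Fin n → F) (c : Fin n → K) :
    (goppaSum α c).map (algebraMap F E) = goppaSum (algebraMap F E ∘ α) c := by
  simp only [goppaSum, Polynomial.map_sum, Polynomial.map_mul, map_C, Polynomial.map_prod,
    Polynomial.map_sub, map_X, Function.comp_apply, ← IsScalarTower.algebraMap_apply]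

theorem X_sub_C_pow_card_dvd_goppaSum [Fintype K] {E : Type*} [Field E] [Algebra K E]
    {a : Fin n → E} {c : Fin n → K} {β : E} (hβ : ∀ i, a i ≠ β)
    (h : (X - C β) ^ (Fintype.card K - 1) ∣ goppaSum a c) :
    (X - C β) ^ Fintype.card K ∣ goppaSum a c := by
  have hq : 1 < Fintype.card K := Fintype.one_lt_card
  rw [goppaSum, X_sub_C_pow_dvd_sum_C_mul_prod_erase_iff _ _ hβ] at h ⊢
  intro k hk
  obtain hk | rfl : k < Fintype.card K - 1 ∨ k = Fintype.card K - 1 := by omega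
  · exact h k hk
  · have h1 := h 0 (by omega)
    simp only [zero_add, pow_one] at h1
    rw [Nat.sub_add_cancel hq.le, ← sum_algebraMap_mul_pow_card, h1, zero_pow (by omega)]

theorem goppaCode_pow_card_eq [Fintype K] (α : Fin n → F) {G : F[X]} (hG : G.Separable)
    (heval : ∀ i, G.eval (α i) ≠ 0) :
    goppaCode (K := K) α (G ^ Fintype.card K) = goppaCode α (G ^ (Fintype.card K - 1)) := by
  refine le_antisymm (fun c hc => (pow_dvd_pow G (Nat.sub_le _ 1)).trans hc) fun c hc => ?_
  let E := AlgebraicClosure F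
  rw [mem_goppaCode, ← map_dvd_map' (algebraMap F E), Polynomial.map_pow, goppaSum_map] at hc ⊢
  refine hG.map.pow_dvd_of_forall_X_sub_C_pow_dvd (IsAlgClosed.splits _) fun β hβ => ?_
  have hroot : (G.map (algebraMap F E)).IsRoot β := isRoot_of_mem_roots hβ
  refine X_sub_C_pow_card_dvd_goppaSum (fun i hi => heval i ?_) ?_
  · rw [← hi, Function.comp_apply, IsRoot, eval_map_algebraMap, aeval_algebraMap_apply] at hroot
    exact (algebraMap F E).injective (hroot.trans (map_zero _).symm)
  · exact (pow_dvd_pow_of_dvd (dvd_iff_isRoot.mpr hroot) _).trans hc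

theorem finrank_goppaCode_ge [FiniteDimensional K F] (α : Fin n → F) {G : F[X]} (hG : G ≠ 0) :
    n - Module.finrank K F * G.natDegree ≤ Module.finrank K (goppaCode (K := K) α G) := by
  let syndrome : (Fin n → K) →ₗ[K] AdjoinRoot G :=
    ((AdjoinRoot.mkₐ G).restrictScalars K).toLinearMap ∘ₗ
      Fintype.linearCombination K fun i => ∏ j ∈ univ.erase i, (X - C (α j))
  have hker : goppaCode α G = LinearMap.ker syndrome := by
    ext c
    rw [mem_goppaCode, LinearMap.mem_ker, goppaSum_eq_linearCombination]
    exact AdjoinRoot.mk_eq_zero.symm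
  have : FiniteDimensional F (AdjoinRoot G) := (AdjoinRoot.powerBasis hG).finite
  have : FiniteDimensional K (AdjoinRoot G) := .trans K F _
  have hdim : Module.finrank K (AdjoinRoot G) = Module.finrank K F * G.natDegree := by
    rw [← Module.finrank_mul_finrank K F, (AdjoinRoot.powerBasis hG).finrank,
      AdjoinRoot.powerBasis_dim]
  have hrank := syndrome.finrank_range_add_finrank_ker
  have hrange := syndrome.range.finrank_le
  rw [Module.finrank_fin_fun] at hrank
  rw [hker]
  omega

end Goppa

theorem goppa_dim_Gq_ge_general {K F : Type*} [Field K] [Fintype K]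
    [Field F] [Fintype F] [Algebra K F] {n r : ℕ}
    (G : Polynomial F) (hsq : Squarefree G) (hdeg : G.natDegree = r)
    (α : Fin n → F)
    (heval : ∀ i, G.eval (α i) ≠ 0) :
    n - Module.finrank K F * (Fintype.card K - 1) * r ≤
      Module.finrank K (goppaCode (K := K) α (G ^ Fintype.card K)) := by
  have hG : G.Separable := PerfectField.separable_iff_squarefree.mpr hsq
  rw [goppaCode_pow_card_eq α hG heval]
  have := finrank_goppaCode_ge (K := K) α (pow_ne_zero (Fintype.card K - 1) hG.ne_zero)
  rwa [natDegree_pow, hdeg, ← mul_assoc] at this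

/-- for a separable polynomial `G` of degree `r ≥ 1` over a degree-`m`
extension `F` of `GF(q)`, the dimension of `Γ(L, G^q)` is at least `n − m(q−1)r`. -/
theorem goppa_dim_Gq_ge {K F : Type*} [Field K] [Fintype K]
    [Field F] [Fintype F] [Algebra K F] {n r : ℕ}
    (G : Polynomial F) (hsq : Squarefree G) (hdeg : G.natDegree = r) (hr : 1 ≤ r)
    (α : Fin n → F) (hα : Function.Injective α)
    (heval : ∀ i, G.eval (α i) ≠ 0) :
    n - Module.finrank K F * (Fintype.card K - 1) * r ≤
      Module.finrank K (goppaCode (K := K) α (G ^ Fintype.card K)) :=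
  goppa_dim_Gq_ge_general G hsq hdeg α heval
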